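/- Let G be a graph with maximum degree at most 3, F a zero forcing set, and S a corresponding chain set. If a vertex x in a non-trivial chain R_1 is unfavorite with respect to S (i.e., x has neighbors a in a non-trivial chain R_2 and b in a non-trivial chain R_3, all three chains distinct, and there is an edge cd with c in R_2, d in R_3, a preceding c in R_2 and d preceding b in R_3), then x is the initial vertex of R_1. -/

import Mathlib

open SimpleGraph

/-- The set of vertices colored after `n` steps of the zero forcing process
starting from the initially colored set `F`. -/
def coloredAt {V : Type*} (G : SimpleGraph V) (F : Set V) : ℕ → Set V
  | 0 => F
  | n + 1 => coloredAt G F n ∪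
      {w | ∃ u ∈ coloredAt G F n, G.Adj u w ∧
        ∀ x, G.Adj u x → x ≠ w → x ∈ coloredAt G F n}

/-- `F` is a zero forcing set of `G`. -/
def IsForcingSet {V : Type*} (G : SimpleGraph V) (F : Set V) : Prop :=
  ∀ v, ∃ n, v ∈ coloredAt G F n

/-- The zero forcing number of `G`. -/
noncomputable def forcingNumber {V : Type*} (G : SimpleGraph V) [Fintype V] : ℕ :=
  sInf {k | ∃ F : Finset V, F.card = k ∧ IsForcingSet G ↑F}

/-- The step at which `v` gets colored. -/
noncomputable def kF {V : Type*} (G : SimpleGraph V) (F : Set V) (v : V) : ℕ :=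
  sInf {n | v ∈ coloredAt G F n}

/-- `u` forces `w` in the forcing process started at `F`. -/
def Forces {V : Type*} (G : SimpleGraph V) (F : Set V) (u w : V) : Prop :=
  G.Adj u w ∧ kF G F u < kF G F w ∧
    ∀ x, G.Adj u x → x ≠ w → kF G F x < kF G F w

/-- A chain set corresponding to the forcing set `F`: a partition of the vertex
set into `k` sequences, each starting at a vertex of `F`, in which every vertex
forces its successor. -/
def IsChainSet {V : Type*} {k : ℕ} (G : SimpleGraph V) (F : Set V)
    (R : Fin k → List V) : Prop :=
  (∀ i, R i ≠ []) ∧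
  (∀ i (h : R i ≠ []), (R i).head h ∈ F) ∧
  (∀ i, (R i).Chain' (Forces G F)) ∧
  (∀ i, (R i).Nodup) ∧
  (∀ i j, i ≠ j → ∀ v, v ∈ R i → v ∉ R j) ∧
  (∀ v, ∃ i, v ∈ R i)

/-- `u` precedes `v` in the chain (list) `L`. -/
def Precedes {V : Type*} (L : List V) (u v : V) : Prop :=
  ∃ p q : Fin L.length, (p : ℕ) < (q : ℕ) ∧ L.get p = u ∧ L.get q = v

lemma coloredAt_mono {V : Type*} (G : SimpleGraph V) (F : Set V) :
    Monotone (coloredAt G F) := by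
  apply monotone_nat_of_le_succ
  intro n
  exact Set.subset_union_left

lemma mem_coloredAt_kF {V : Type*} (G : SimpleGraph V) (F : Set V) (v : V)
    (h : ∃ n, v ∈ coloredAt G F n) : v ∈ coloredAt G F (kF G F v) :=
  Nat.sInf_mem h

lemma mem_coloredAt_of_kF_le {V : Type*} (G : SimpleGraph V) (F : Set V) (v : V)
    (h : ∃ n, v ∈ coloredAt G F n) {n : ℕ} (hn : kF G F v ≤ n) :
    v ∈ coloredAt G F n :=
  coloredAt_mono G F hn (mem_coloredAt_kF G F v h)

lemma kF_le_of_mem {V : Type*} {G : SimpleGraph V} {F : Set V} {v : V} {n : ℕ}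
    (h : v ∈ coloredAt G F n) : kF G F v ≤ n :=
  Nat.sInf_le h

lemma kF_lt_of_chain' {V : Type*} (G : SimpleGraph V) (F : Set V) {L : List V}
    (h : L.Chain' (Forces G F)) {p q : Fin L.length} (hpq : (p : ℕ) < (q : ℕ)) :
    kF G F (L.get p) < kF G F (L.get q) := by
  haveI : IsTrans V (fun u v => kF G F u < kF G F v) := ⟨fun _ _ _ => lt_trans⟩
  have h2 : L.Pairwise (fun u v => kF G F u < kF G F v) :=
    List.isChain_iff_pairwise.mp (List.IsChain.imp (fun a b hf => hf.2.1) h)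
  exact List.pairwise_iff_get.mp h2 p q hpq

lemma kF_le_of_chain' {V : Type*} (G : SimpleGraph V) (F : Set V) {L : List V}
    (h : L.Chain' (Forces G F)) {p q : Fin L.length} (hpq : (p : ℕ) ≤ (q : ℕ)) :
    kF G F (L.get p) ≤ kF G F (L.get q) := by
  rcases lt_or_eq_of_le hpq with hlt | heq
  · exact le_of_lt (kF_lt_of_chain' G F h hlt)
  · rw [Fin.ext heq]

/-- In a graph of maximum degree at most 3, every unfavorite vertex is the
initial vertex of its chain. -/
theorem unfavorite_is_initial {V : Type*} [Fintype V] [DecidableEq V]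
    (G : SimpleGraph V) [DecidableRel G.Adj] (hdeg : ∀ v, G.degree v ≤ 3)
    {k : ℕ} (F : Finset V) (hF : IsForcingSet G ↑F)
    (R : Fin k → List V) (hR : IsChainSet G ↑F R)
    (i₁ i₂ i₃ : Fin k) (h12 : i₁ ≠ i₂) (h13 : i₁ ≠ i₃) (h23 : i₂ ≠ i₃)
    (h1 : 2 ≤ (R i₁).length) (h2 : 2 ≤ (R i₂).length) (h3 : 2 ≤ (R i₃).length)
    (x a b c d : V) (hx : x ∈ R i₁) (ha : a ∈ R i₂) (hb : b ∈ R i₃)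
    (hc : c ∈ R i₂) (hd : d ∈ R i₃)
    (hxa : G.Adj x a) (hxb : G.Adj x b) (hcd : G.Adj c d)
    (hac : Precedes (R i₂) a c) (hdb : Precedes (R i₃) d b) :
    (R i₁).head? = some x := by
  classical
  obtain ⟨hne, hhead, hchain, hnodup, hdisj, hcov⟩ := hR
  obtain ⟨ix, hgx⟩ := List.mem_iff_get.mp hx
  rcases Nat.eq_zero_or_pos ix.val with h0 | hpos
  · -- x is at index 0, hence it is the head
    cases hL : R i₁ with
    | nil => exact absurd hL (hne i₁)
    | cons y t =>
      have hy : (R i₁).get ⟨0, by omega⟩ = y := by simp [hL]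
      have : (R i₁).get ⟨0, by omega⟩ = x := by
        rw [show ((⟨0, by omega⟩ : Fin (R i₁).length)) = ix from Fin.ext h0.symm]
        exact hgx
      rw [hy] at this
      simp [hL, this]
  · -- x has a predecessor w : derive a contradiction
    exfalso
    have hixlen : ix.val - 1 < (R i₁).length - 1 := by omega
    have hwlt : ix.val - 1 < (R i₁).length := by omega
    set w : V := (R i₁).get ⟨ix.val - 1, hwlt⟩ with hw
    have hforce_wx : Forces G (↑F) w x := by
      have h' : Forces G (↑F) ((R i₁).get ⟨ix.val - 1, by omega⟩) ((R i₁).get ⟨ix.val - 1 + 1, by omega⟩) :=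
        List.isChain_iff_getElem.mp (hchain i₁) (ix.val - 1) (by omega)
      rwa [show ((R i₁).get ⟨ix.val - 1 + 1, by omega⟩) = x by
        rw [show ((⟨ix.val - 1 + 1, by omega⟩ : Fin (R i₁).length)) = ix from
          Fin.ext (by simp; omega)]
        exact hgx] at h'
    have hwmem : w ∈ R i₁ := List.get_mem _ _
    -- successors a' of a in R i₂ and d' of d in R i₃
    obtain ⟨pa, pc, hpapc, hgpa, hgpc⟩ := hac
    obtain ⟨pd, pb, hpdpb, hgpd, hgpb⟩ := hdb
    have hpa1 : pa.val + 1 < (R i₂).length := by omega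
    have hpd1 : pd.val + 1 < (R i₃).length := by omega
    set a' : V := (R i₂).get ⟨pa.val + 1, hpa1⟩ with ha'
    set d' : V := (R i₃).get ⟨pd.val + 1, hpd1⟩ with hd'
    have hforce_a : Forces G (↑F) a a' := by
      have h' : Forces G (↑F) ((R i₂).get ⟨pa.val, by omega⟩) ((R i₂).get ⟨pa.val + 1, by omega⟩) :=
        List.isChain_iff_getElem.mp (hchain i₂) pa.val (by omega)
      rwa [show ((R i₂).get ⟨pa.val, by omega⟩) = a by
        rw [show ((⟨pa.val, by omega⟩ : Fin (R i₂).length)) = pa from Fin.ext rfl]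
        exact hgpa] at h'
    have hforce_d : Forces G (↑F) d d' := by
      have h' : Forces G (↑F) ((R i₃).get ⟨pd.val, by omega⟩) ((R i₃).get ⟨pd.val + 1, by omega⟩) :=
        List.isChain_iff_getElem.mp (hchain i₃) pd.val (by omega)
      rwa [show ((R i₃).get ⟨pd.val, by omega⟩) = d by
        rw [show ((⟨pd.val, by omega⟩ : Fin (R i₃).length)) = pd from Fin.ext rfl]
        exact hgpd] at h'
    have ha'mem : a' ∈ R i₂ := List.get_mem _ _
    have hd'mem : d' ∈ R i₃ := List.get_mem _ _
    -- disjointness facts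
    have hxR2 : x ∉ R i₂ := hdisj i₁ i₂ h12 x hx
    have hxR3 : x ∉ R i₃ := hdisj i₁ i₃ h13 x hx
    have hwR2 : w ∉ R i₂ := hdisj i₁ i₂ h12 w hwmem
    have hwR3 : w ∉ R i₃ := hdisj i₁ i₃ h13 w hwmem
    have hcR3 : c ∉ R i₃ := hdisj i₂ i₃ h23 c hc
    have haR3 : a ∉ R i₃ := hdisj i₂ i₃ h23 a ha
    have hxa' : x ≠ a' := fun h => hxR2 (h ▸ ha'mem)
    have hcd' : c ≠ d' := fun h => hcR3 (h ▸ hd'mem)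
    have hwa : w ≠ a := fun h => hwR2 (h ▸ ha)
    have hwb : w ≠ b := fun h => hwR3 (h ▸ hb)
    have hab : a ≠ b := fun h => haR3 (h ▸ hb)
    -- key timing inequalities
    have hkwx : kF G (↑F) w < kF G (↑F) x := hforce_wx.2.1
    have hkxa' : kF G (↑F) x < kF G (↑F) a' := hforce_a.2.2 x hxa.symm hxa'
    have hkaa' : kF G (↑F) a < kF G (↑F) a' := hforce_a.2.1
    have hka'c : kF G (↑F) a' ≤ kF G (↑F) c := by
      have := kF_le_of_chain' G (↑F) (hchain i₂)
        (p := ⟨pa.val + 1, hpa1⟩) (q := pc) (by simpa using hpapc)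
      rwa [hgpc] at this
    have hkcd' : kF G (↑F) c < kF G (↑F) d' := hforce_d.2.2 c hcd.symm hcd'
    have hkd'b : kF G (↑F) d' ≤ kF G (↑F) b := by
      have := kF_le_of_chain' G (↑F) (hchain i₃)
        (p := ⟨pd.val + 1, hpd1⟩) (q := pb) (by simpa using hpdpb)
      rwa [hgpb] at this
    -- the neighborhood of x is exactly {w, a, b}
    have hadjxw : G.Adj x w := hforce_wx.1.symm
    have hnbr : ∀ y, G.Adj x y → y = w ∨ y = a ∨ y = b := by
      have hsub : ({w, a, b} : Finset V) ⊆ G.neighborFinset x := by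
        intro y hy
        rw [SimpleGraph.mem_neighborFinset]
        simp only [Finset.mem_insert, Finset.mem_singleton] at hy
        rcases hy with rfl | rfl | rfl
        · exact hadjxw
        · exact hxa
        · exact hxb
      have hcard : ({w, a, b} : Finset V).card = 3 := by
        rw [Finset.card_insert_of_notMem (by simp [hwa, hwb]),
          Finset.card_insert_of_notMem (by simp [hab]), Finset.card_singleton]
      have heq : ({w, a, b} : Finset V) = G.neighborFinset x :=
        Finset.eq_of_subset_of_card_le hsub (by rw [hcard]; exact hdeg x)
      intro y hy
      have : y ∈ ({w, a, b} : Finset V) := by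
        rw [heq, SimpleGraph.mem_neighborFinset]; exact hy
      simpa using this
    -- at step n := max (kF x) (kF a), x and all its neighbors except b are colored
    set n : ℕ := max (kF G (↑F) x) (kF G (↑F) a) with hn
    have hbstep : b ∈ coloredAt G (↑F) (n + 1) := by
      have hxcol : x ∈ coloredAt G (↑F) n :=
        mem_coloredAt_of_kF_le G (↑F) x (hF x) (le_max_left _ _)
      refine Set.mem_union_right _ ⟨x, hxcol, hxb, ?_⟩
      intro y hy hyb
      rcases hnbr y hy with h | h | h
      · exact mem_coloredAt_of_kF_le G (↑F) y (hF y)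
          (by rw [h]; exact le_trans (le_of_lt hkwx) (le_max_left _ _))
      · exact mem_coloredAt_of_kF_le G (↑F) y (hF y)
          (by rw [h]; exact le_max_right _ _)
      · exact absurd h hyb
    have hkb_le : kF G (↑F) b ≤ n + 1 := kF_le_of_mem hbstep
    have hna' : n < kF G (↑F) a' := max_lt_iff.mpr ⟨hkxa', hkaa'⟩
    omega
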